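/- Let G be a K4-free graph with e edges, let v be a vertex of G with degree d(v) > 0, and let e_v be the number of edges spanned by the neighborhood N(v). Then b(G) ≥ (e - e_v)/2 + 4e_v^2/d(v)^2. -/

import Mathlib

open Finset

namespace SimpleGraph

variable {V : Type*} [Fintype V] [DecidableEq V] (G : SimpleGraph V) [DecidableRel G.Adj]

/-- The number of edges of `G` crossing the cut `(S, Sᶜ)`. -/
def cutSize (S : Finset V) : ℕ :=
  ((S ×ˢ Sᶜ).filter fun p => G.Adj p.1 p.2).card

/-- `b(G)`: the maximum number of edges in a bipartite subgraph of `G`,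
equivalently the maximum over vertex subsets `S` of the number of edges
between `S` and its complement. -/
def maxCut : ℕ := Finset.univ.sup fun S : Finset V => G.cutSize S

/-- The number of edges of `G` with both endpoints in `S`. -/
def spanEdges (S : Finset V) : ℕ :=
  (G.edgeFinset.filter fun e => e ∈ S.sym2).card

end SimpleGraph

/-!
Let `D = N(v)`, write `d_D(w)` for the number of neighbours of `w` in `D`, and pick `u ∈ D`
maximising `∑_{w ∈ N(u) ∩ D} d_D(w)`. As `G` is `K₄`-free, `S = N(u) ∩ D` is independent, so the
edges inside `D` leaving `S` number `∑_{w ∈ S} d_D(w) ≥ d⁻¹ ∑_{w ∈ D} d_D(w)² ≥ 4 e_v² / d²`: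
the middle term is the average of the maximised sum over `u ∈ D`, and the last step is
Cauchy–Schwarz with `∑_{w ∈ D} d_D(w) = 2 e_v`. Extending `S` by a uniformly random
subset of `Dᶜ` keeps all these edges in the cut and cuts every edge not inside `D` with
probability `1/2`, so some cut has at least `4 e_v² / d² + (e - e_v) / 2` edges.
-/

open scoped symmDiff

namespace Finset

lemma two_mul_card_filter_powerset_of_symmDiff {α : Type*} [DecidableEq α] {M : Finset α}
    {x : α} (hx : x ∈ M) {p : Finset α → Prop} [DecidablePred p]
    (hp : ∀ T ⊆ M, p (T ∆ {x}) ↔ ¬p T) :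
    2 * #{T ∈ M.powerset | p T} = 2 ^ #M := by
  have hmaps {T : Finset α} (hT : T ⊆ M) : T ∆ {x} ⊆ M :=
    symmDiff_le_sup.trans (union_subset hT (singleton_subset_iff.2 hx))
  have hhalf : #{T ∈ M.powerset | p T} = #{T ∈ M.powerset | ¬p T} := by
    refine card_nbij' (· ∆ {x}) (· ∆ {x}) ?_ ?_ ?_ ?_
    · intro T hT
      simp only [coe_filter, mem_powerset, Set.mem_ofPred_eq] at hT ⊢
      exact ⟨hmaps hT.1, fun h => (hp T hT.1).1 h hT.2⟩
    · intro T hT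
      simp only [coe_filter, mem_powerset, Set.mem_ofPred_eq] at hT ⊢
      exact ⟨hmaps hT.1, (hp T hT.1).2 hT.2⟩
    · exact fun T _ => symmDiff_symmDiff_cancel_right _ _
    · exact fun T _ => symmDiff_symmDiff_cancel_right _ _
  rw [two_mul, ← card_powerset]
  nth_rw 2 [hhalf]
  exact card_filter_add_card_filter_not _

end Finset

namespace SimpleGraph

variable {V : Type*}

section Crosses

variable [Fintype V] [DecidableEq V]

def Crosses (S : Finset V) (z : Sym2 V) : Prop := z ∉ S.sym2 ∧ z ∉ Sᶜ.sym2

instance (S : Finset V) : DecidablePred (Crosses S) :=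
  fun _ => inferInstanceAs (Decidable (_ ∧ _))

lemma crosses_mk {S : Finset V} {a b : V} : Crosses S s(a, b) ↔ (a ∈ S ↔ b ∉ S) := by
  simp only [Crosses, mk_mem_sym2_iff, mem_compl]
  tauto

lemma crosses_congr {S S' : Finset V} {z : Sym2 V} (h : ∀ a ∈ z, a ∈ S ↔ a ∈ S') :
    Crosses S z ↔ Crosses S' z := by
  induction z using Sym2.ind with
  | _ a b => rw [crosses_mk, crosses_mk, h a (Sym2.mem_mk_left a b), h b (Sym2.mem_mk_right a b)]

lemma crosses_symmDiff_singleton {S : Finset V} {z : Sym2 V} {x : V} (hx : x ∈ z)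
    (hz : ¬z.IsDiag) : Crosses (S ∆ {x}) z ↔ ¬Crosses S z := by
  obtain ⟨y, rfl⟩ := Sym2.mem_iff_exists.1 hx
  have hyx : y ≠ x := fun h => hz (Sym2.mk_isDiag_iff.2 h.symm)
  simp only [crosses_mk, mem_symmDiff, mem_singleton, hyx]
  tauto

variable {D S₀ : Finset V}

lemma card_filter_powerset_crosses_union_of_mem_sym2 {e : Sym2 V} (he : e ∈ D.sym2) :
    #{T ∈ Dᶜ.powerset | Crosses (S₀ ∪ T) e} = 2 ^ #Dᶜ * if Crosses S₀ e then 1 else 0 := by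
  have hcongr (T : Finset V) (hT : T ∈ Dᶜ.powerset) : Crosses (S₀ ∪ T) e ↔ Crosses S₀ e := by
    refine crosses_congr fun a ha => ?_
    have haT : a ∉ T := fun h => mem_compl.1 (mem_powerset.1 hT h) (mem_sym2_iff.1 he a ha)
    simp [haT]
  rw [filter_congr hcongr, filter_const]
  split_ifs <;> simp

lemma two_mul_card_filter_powerset_crosses_union_of_notMem_sym2 (hS₀ : S₀ ⊆ D)
    {e : Sym2 V} (hdiag : ¬e.IsDiag) (he : e ∉ D.sym2) :
    2 * #{T ∈ Dᶜ.powerset | Crosses (S₀ ∪ T) e} = 2 ^ #Dᶜ := by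
  obtain ⟨x, hxe, hxD⟩ : ∃ x ∈ e, x ∉ D := by simpa [mem_sym2_iff] using he
  refine two_mul_card_filter_powerset_of_symmDiff (mem_compl.2 hxD) fun T _ => ?_
  have hxS₀ : x ∉ S₀ := fun h => hxD (hS₀ h)
  have htoggle : S₀ ∪ T ∆ {x} = (S₀ ∪ T) ∆ {x} := by
    ext y
    simp only [mem_union, mem_symmDiff, mem_singleton]
    by_cases hy : y = x
    · subst hy; tauto
    · simp only [hy]; tauto
  rw [htoggle, crosses_symmDiff_singleton hxe hdiag]

end Crosses

lemma isIndepSet_commonNeighbors_of_cliqueFree_four [DecidableEq V] {G : SimpleGraph V}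
    (hG : G.CliqueFree 4) {u v : V} (huv : G.Adj u v) :
    G.IsIndepSet (G.commonNeighbors u v) := by
  intro a ha b hb _ hab
  rw [mem_commonNeighbors] at ha hb
  refine hG {u, v, a, b} ((is3Clique_triple_iff.2 ⟨ha.2, hb.2, hab⟩).insert ?_)
  simp only [mem_insert, mem_singleton, forall_eq_or_imp, forall_eq]
  exact ⟨huv, ha.1, hb.1⟩

variable (G : SimpleGraph V) [DecidableRel G.Adj]

lemma sum_card_filter_adj_eq_card_interedges (S R : Finset V) :
    ∑ a ∈ S, #{b ∈ R | G.Adj a b} = #(G.interedges S R) := by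
  rw [interedges_def, card_filter, sum_product]
  simp only [card_filter]

lemma sum_sum_filter_adj {M : Type*} [AddCommMonoid M] (D : Finset V) (f : V → M) :
    ∑ u ∈ D, ∑ w ∈ D with G.Adj u w, f w = ∑ w ∈ D, #{u ∈ D | G.Adj w u} • f w := by
  simp only [sum_filter]
  rw [sum_comm]
  refine sum_congr rfl fun w _ => ?_
  simp only [← sum_filter, sum_const, G.adj_comm]

lemma exists_sq_sum_card_filter_adj_le {D : Finset V} (hD : D.Nonempty) :
    ∃ u ∈ D, (∑ w ∈ D, #{x ∈ D | G.Adj w x}) ^ 2 ≤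
      #D ^ 2 * ∑ w ∈ D with G.Adj u w, #{x ∈ D | G.Adj w x} := by
  set f : V → ℕ := fun w => #{x ∈ D | G.Adj w x}
  obtain ⟨u, hu, hmax⟩ := exists_max_image D (fun u => ∑ w ∈ D with G.Adj u w, f w) hD
  refine ⟨u, hu, ?_⟩
  calc (∑ w ∈ D, f w) ^ 2
      ≤ #D * ∑ w ∈ D, f w ^ 2 := sq_sum_le_card_mul_sum_sq
    _ = #D * ∑ u' ∈ D, ∑ w ∈ D with G.Adj u' w, f w := by
        rw [sum_sum_filter_adj]
        simp only [sq, smul_eq_mul, f]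
    _ ≤ #D * (#D * ∑ w ∈ D with G.Adj u w, f w) := by
        gcongr
        simpa using sum_le_card_nsmul D _ _ hmax
    _ = #D ^ 2 * ∑ w ∈ D with G.Adj u w, f w := by ring

variable [Fintype V] [DecidableEq V]

lemma card_interedges_eq_card_crosses {S R : Finset V} (h : Disjoint S R) :
    #(G.interedges S R) = #{e ∈ G.edgeFinset | e ∈ (S ∪ R).sym2 ∧ Crosses S e} := by
  refine card_bij (fun p _ => s(p.1, p.2)) ?_ ?_ ?_
  · rintro ⟨a, b⟩ hab
    obtain ⟨ha, hb, hadj⟩ := (G.mk_mem_interedges_iff).1 hab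
    simp only [mem_filter, mem_edgeFinset, mem_edgeSet, mk_mem_sym2_iff, mem_union, crosses_mk]
    exact ⟨hadj, ⟨.inl ha, .inr hb⟩, iff_of_true ha (disjoint_right.1 h hb)⟩
  · rintro ⟨a, b⟩ hab ⟨c, d⟩ hcd heq
    rw [mk_mem_interedges_iff] at hab hcd
    rcases Sym2.eq_iff.1 heq with ⟨rfl, rfl⟩ | ⟨rfl, rfl⟩
    · rfl
    · exact absurd hab.1 (disjoint_right.1 h hcd.2.1)
  · intro e he
    induction e using Sym2.ind with
    | _ a b =>
      simp only [mem_filter, mem_edgeFinset, mem_edgeSet, mk_mem_sym2_iff, mem_union,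
        crosses_mk] at he
      obtain ⟨hadj, ⟨ha, hb⟩, hcross⟩ := he
      by_cases haS : a ∈ S
      · refine ⟨(a, b), (G.mk_mem_interedges_iff).2 ⟨haS, ?_, hadj⟩, rfl⟩
        exact hb.resolve_left (hcross.1 haS)
      · refine ⟨(b, a), (G.mk_mem_interedges_iff).2 ⟨?_, ha.resolve_left haS, hadj.symm⟩,
          Sym2.eq_swap⟩
        by_contra hbS
        exact haS (hcross.2 hbS)

lemma cutSize_eq_card_crosses (S : Finset V) :
    G.cutSize S = #{e ∈ G.edgeFinset | Crosses S e} := by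
  rw [cutSize, ← interedges_def, card_interedges_eq_card_crosses G disjoint_compl_right]
  simp

lemma cutSize_le_maxCut (S : Finset V) : G.cutSize S ≤ G.maxCut :=
  le_sup (f := G.cutSize) (mem_univ S)

variable {D S₀ : Finset V}

lemma two_mul_sum_cutSize_union (hS₀ : S₀ ⊆ D) :
    2 * ∑ T ∈ Dᶜ.powerset, G.cutSize (S₀ ∪ T) =
      2 ^ #Dᶜ * (2 * #{e ∈ G.edgeFinset | e ∈ D.sym2 ∧ Crosses S₀ e} +
        #{e ∈ G.edgeFinset | e ∉ D.sym2}) := by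
  have hswap : ∑ T ∈ Dᶜ.powerset, G.cutSize (S₀ ∪ T) =
      ∑ e ∈ G.edgeFinset, #{T ∈ Dᶜ.powerset | Crosses (S₀ ∪ T) e} := by
    simp only [cutSize_eq_card_crosses, card_filter]
    exact sum_comm
  have hinside : ∑ e ∈ G.edgeFinset with e ∈ D.sym2, #{T ∈ Dᶜ.powerset | Crosses (S₀ ∪ T) e} =
      2 ^ #Dᶜ * #{e ∈ G.edgeFinset | e ∈ D.sym2 ∧ Crosses S₀ e} := by
    rw [sum_congr rfl fun e he => card_filter_powerset_crosses_union_of_mem_sym2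
      (mem_filter.1 he).2, ← mul_sum, sum_boole, filter_filter, Nat.cast_id]
  have houtside : 2 * ∑ e ∈ G.edgeFinset with e ∉ D.sym2,
      #{T ∈ Dᶜ.powerset | Crosses (S₀ ∪ T) e} = 2 ^ #Dᶜ * #{e ∈ G.edgeFinset | e ∉ D.sym2} := by
    rw [mul_sum, sum_congr rfl fun e he =>
      two_mul_card_filter_powerset_crosses_union_of_notMem_sym2 hS₀
        (G.not_isDiag_of_mem_edgeSet (mem_edgeFinset.1 (mem_filter.1 he).1)) (mem_filter.1 he).2,
      sum_const, smul_eq_mul, mul_comm]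
  rw [hswap, ← sum_filter_add_sum_filter_not _ (· ∈ D.sym2), mul_add, houtside, hinside]
  ring

lemma two_mul_card_crosses_add_card_le_two_mul_maxCut (hS₀ : S₀ ⊆ D) :
    2 * #{e ∈ G.edgeFinset | e ∈ D.sym2 ∧ Crosses S₀ e} + #{e ∈ G.edgeFinset | e ∉ D.sym2} ≤
      2 * G.maxCut := by
  have hsum : ∑ T ∈ Dᶜ.powerset, G.cutSize (S₀ ∪ T) ≤ 2 ^ #Dᶜ * G.maxCut := by
    simpa [card_powerset] using
      sum_le_card_nsmul Dᶜ.powerset _ _ fun T _ => G.cutSize_le_maxCut (S₀ ∪ T)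
  refine le_of_mul_le_mul_left ?_ (pow_pos two_pos #Dᶜ)
  rw [← two_mul_sum_cutSize_union G hS₀, mul_left_comm]
  exact Nat.mul_le_mul_left 2 hsum

lemma sum_card_filter_adj_eq_two_mul_spanEdges (D : Finset V) :
    ∑ w ∈ D, #{x ∈ D | G.Adj w x} = 2 * G.spanEdges D := by
  -- `congr!` closes the goals that differ only in `Fintype` instances on `↥(D : Set V)`.
  have hdeg (w : (D : Set V)) : (G.induce D).degree w = #{x ∈ D | G.Adj w x} := by
    rw [← card_neighborFinset_eq_degree, ← card_map (.subtype (· ∈ (D : Set V)))]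
    convert congrArg card (map_neighborFinset_induce (G := G) (s := (D : Set V)) w) using 2
    · congr!
    · ext; simp [and_comm]
  have hedges : G.spanEdges D = #(G.induce D).edgeFinset := by
    rw [← card_map (Function.Embedding.subtype (· ∈ (D : Set V))).sym2Map]
    convert congrArg card (map_edgeFinset_induce (G := G) (s := (D : Set V))).symm using 2
    · rw [Finset.toFinset_coe, spanEdges, filter_mem_eq_inter]
    · congr!
  rw [hedges, ← sum_degrees_eq_twice_card_edges]
  simp only [hdeg]
  exact (sum_coe_sort D _).symm

lemma card_crosses_eq_sum_card_filter_adj_of_isIndepSet {S D : Finset V} (hSD : S ⊆ D)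
    (hS : G.IsIndepSet S) :
    #{e ∈ G.edgeFinset | e ∈ D.sym2 ∧ Crosses S e} = ∑ w ∈ S, #{x ∈ D | G.Adj w x} := by
  have hout (w : V) (hw : w ∈ S) : {x ∈ D | G.Adj w x} = {x ∈ D \ S | G.Adj w x} := by
    ext x
    simp only [mem_filter, mem_sdiff]
    exact ⟨fun ⟨hx, hadj⟩ => ⟨⟨hx, fun hxS => hS hw hxS hadj.ne hadj⟩, hadj⟩,
      fun ⟨⟨hx, _⟩, hadj⟩ => ⟨hx, hadj⟩⟩
  rw [sum_congr rfl fun w hw => congrArg card (hout w hw),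
    sum_card_filter_adj_eq_card_interedges, card_interedges_eq_card_crosses G disjoint_sdiff,
    union_sdiff_of_subset hSD]

lemma exists_subset_neighborFinset_four_mul_sq_spanEdges_le (hG : G.CliqueFree 4) (v : V) :
    ∃ S ⊆ G.neighborFinset v, 4 * G.spanEdges (G.neighborFinset v) ^ 2 ≤
      G.degree v ^ 2 * #{e ∈ G.edgeFinset | e ∈ (G.neighborFinset v).sym2 ∧ Crosses S e} := by
  set D := G.neighborFinset v
  rcases D.eq_empty_or_nonempty with hD | hD
  · exact ⟨∅, empty_subset D, by simp [spanEdges, hD]⟩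
  obtain ⟨u, hu, hsq⟩ := exists_sq_sum_card_filter_adj_le G hD
  have hSD : {w ∈ D | G.Adj u w} ⊆ D := filter_subset _ D
  have hind : G.IsIndepSet ({w ∈ D | G.Adj u w} : Finset V) := by
    refine (isIndepSet_commonNeighbors_of_cliqueFree_four hG
      ((G.mem_neighborFinset v u).1 hu).symm).mono fun w hw => ?_
    simp only [coe_filter, Set.mem_ofPred_eq, mem_neighborFinset, D] at hw
    exact G.mem_commonNeighbors.2 ⟨hw.2, hw.1⟩
  refine ⟨_, hSD, ?_⟩
  rw [card_crosses_eq_sum_card_filter_adj_of_isIndepSet G hSD hind,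
    ← card_neighborFinset_eq_degree]
  rw [sum_card_filter_adj_eq_two_mul_spanEdges] at hsq
  linarith

end SimpleGraph

theorem K4_free_neighborhood_max_cut_general {V : Type*} [Fintype V] [DecidableEq V]
    (G : SimpleGraph V) [DecidableRel G.Adj] (hG : G.CliqueFree 4) (v : V) :
    ((G.edgeFinset.card : ℝ) - (G.spanEdges (G.neighborFinset v) : ℝ)) / 2 +
        4 * (G.spanEdges (G.neighborFinset v) : ℝ) ^ 2 / (G.degree v : ℝ) ^ 2 ≤
      G.maxCut := by
  set D := G.neighborFinset v
  obtain ⟨S, hSD, hS⟩ := G.exists_subset_neighborFinset_four_mul_sq_spanEdges_le hG v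
  set inside := #{e ∈ G.edgeFinset | e ∈ D.sym2 ∧ SimpleGraph.Crosses S e}
  set outside := #{e ∈ G.edgeFinset | e ∉ D.sym2}
  have hcut : (2 * inside + outside : ℝ) ≤ 2 * G.maxCut := by
    exact_mod_cast G.two_mul_card_crosses_add_card_le_two_mul_maxCut hSD
  have hsplit : (G.spanEdges D + outside : ℝ) = #G.edgeFinset := by
    exact_mod_cast card_filter_add_card_filter_not _
  have hinside : 4 * (G.spanEdges D : ℝ) ^ 2 / (G.degree v : ℝ) ^ 2 ≤ inside := by
    refine div_le_of_le_mul₀ (by positivity) (by positivity) ?_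
    rw [mul_comm _ ((G.degree v : ℝ) ^ 2)]
    exact_mod_cast hS
  linarith

/-- If `G` is `K₄`-free with `e` edges and `v` is a vertex of positive degree, with
`e_v` edges spanned by `N(v)`, then `b(G) ≥ (e - e_v)/2 + 4 e_v² / d(v)²`. -/
theorem K4_free_neighborhood_max_cut {V : Type*} [Fintype V] [DecidableEq V]
    (G : SimpleGraph V) [DecidableRel G.Adj] (hG : G.CliqueFree 4) (v : V)
    (hd : 0 < G.degree v) :
    ((G.edgeFinset.card : ℝ) - (G.spanEdges (G.neighborFinset v) : ℝ)) / 2 +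
        4 * (G.spanEdges (G.neighborFinset v) : ℝ) ^ 2 / (G.degree v : ℝ) ^ 2 ≤
      G.maxCut :=
  K4_free_neighborhood_max_cut_general G hG v
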